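/- If there exists a generalized complex structure on V, i.e. a linear map J : 𝕍 → 𝕍 with J² = −Id which is orthogonal with respect to the natural pairing, then the dimension m of V is even. -/

import Mathlib

/-!
In a basis of `V ⊕ V*` made of a basis of `V` and its dual basis, the pairing has Gram matrix
`G = ½ [[0, 1], [1, 0]]`, with `det G = (-1/4) ^ m`. If `J` is orthogonal with `J² = -1`, then
`Jᵀ G = G J⁻¹ = -G J`, so `G J` is skew-symmetric and invertible. A real matrix of even size
without real eigenvalues has positive determinant (its characteristic polynomial is monic with
no real root); this applies both to `J` and to `G J`, hence `det G > 0` and `m` is even.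
-/

open Polynomial Matrix

theorem Polynomial.Monic.eval_pos_of_forall_eval_ne_zero {p : ℝ[X]} (hp : p.Monic)
    (hroot : ∀ t, p.eval t ≠ 0) (x : ℝ) : 0 < p.eval x := by
  obtain ⟨t, ht⟩ : ∃ t, 0 < p.eval t := by
    rcases Nat.eq_zero_or_pos p.natDegree with hdeg | hdeg
    · exact ⟨0, by simp [hp.natDegree_eq_zero.mp hdeg]⟩
    · have htop := p.tendsto_atTop_of_leadingCoeff_nonneg (natDegree_pos_iff_degree_pos.mp hdeg)
        (by rw [hp.leadingCoeff]; exact zero_le_one)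
      exact (htop.eventually_gt_atTop 0).exists
  by_contra! hx
  obtain ⟨c, hc⟩ := intermediate_value_univ x t p.continuous ⟨hx, ht.le⟩
  exact hroot c hc

namespace Matrix

variable {n : Type*} [Fintype n] [DecidableEq n]

theorem det_pos_of_forall_mulVec_eq_smul {M : Matrix n n ℝ} (hn : Even (Fintype.card n))
    (h : ∀ (t : ℝ) (v : n → ℝ), M *ᵥ v = t • v → v = 0) : 0 < M.det := by
  have hroot (t : ℝ) : M.charpoly.eval t ≠ 0 := by
    rw [eval_charpoly]
    intro h0
    obtain ⟨v, hv, hMv⟩ := exists_mulVec_eq_zero_iff.mpr h0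
    refine hv (h t v ?_)
    rw [sub_mulVec, sub_eq_zero] at hMv
    simpa [scalar_apply, smul_eq_diagonal_mul] using hMv.symm
  have := M.charpoly_monic.eval_pos_of_forall_eval_ne_zero hroot 0
  rwa [eval_charpoly, map_zero, zero_sub, det_neg, hn.neg_one_pow, one_mul] at this

theorem det_pos_of_mul_self_eq_neg_one {M : Matrix n n ℝ} (hM : M * M = -1) : 0 < M.det := by
  have hn : Even (Fintype.card n) := by
    have hsq : M.det * M.det = (-1) ^ Fintype.card n := by
      rw [← det_mul, hM, det_neg, det_one, mul_one]
    by_contra hodd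
    rw [(Nat.not_even_iff_odd.mp hodd).neg_one_pow] at hsq
    nlinarith [mul_self_nonneg M.det]
  refine det_pos_of_forall_mulVec_eq_smul hn fun t v hv => ?_
  have hsq : -v = (t * t) • v :=
    calc -v = (M * M) *ᵥ v := by rw [hM, neg_mulVec, one_mulVec]
      _ = M *ᵥ (M *ᵥ v) := (mulVec_mulVec v M M).symm
      _ = (t * t) • v := by rw [hv, mulVec_smul, hv, smul_smul]
  have : (t ^ 2 + 1) • v = 0 := by
    rw [add_smul, one_smul, sq, ← hsq, neg_add_cancel]
  exact (smul_eq_zero.mp this).resolve_left (by positivity)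

theorem det_pos_of_transpose_eq_neg {K : Matrix n n ℝ} (hK : Kᵀ = -K) (hdet : K.det ≠ 0) :
    0 < K.det := by
  have hn : Even (Fintype.card n) := by
    by_contra hodd
    have := det_transpose K
    rw [hK, det_neg, (Nat.not_even_iff_odd.mp hodd).neg_one_pow] at this
    exact hdet (by linarith)
  refine det_pos_of_forall_mulVec_eq_smul hn fun t v hv => ?_
  have hisotropic : v ⬝ᵥ K *ᵥ v = 0 := by
    have : v ⬝ᵥ K *ᵥ v = -(v ⬝ᵥ K *ᵥ v) := by
      conv_lhs => rw [← vecMul_transpose, hK, vecMul_neg, dotProduct_neg, dotProduct_comm,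
        ← dotProduct_mulVec]
    linarith
  rcases eq_or_ne t 0 with rfl | ht
  · exact eq_zero_of_mulVec_eq_zero hdet (by rw [hv, zero_smul])
  · rw [hv, dotProduct_smul, smul_eq_mul, mul_eq_zero] at hisotropic
    exact dotProduct_self_eq_zero.mp (hisotropic.resolve_left ht)

theorem det_pos_of_transpose_mul_mul_eq {G J : Matrix n n ℝ} (hG : G.IsSymm) (hdet : G.det ≠ 0)
    (hJ : J * J = -1) (horth : Jᵀ * G * J = G) : 0 < G.det := by
  have hskew : (G * J)ᵀ = -(G * J) :=
    calc (G * J)ᵀ = Jᵀ * G := by rw [transpose_mul, hG.eq]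
      _ = Jᵀ * G * J * -J := by rw [Matrix.mul_assoc _ J, Matrix.mul_neg, hJ, neg_neg, mul_one]
      _ = -(G * J) := by rw [horth, Matrix.mul_neg]
  have hJpos := det_pos_of_mul_self_eq_neg_one hJ
  have hpos :=
    det_pos_of_transpose_eq_neg hskew (by rw [det_mul]; exact mul_ne_zero hdet hJpos.ne')
  rw [det_mul] at hpos
  exact pos_of_mul_pos_left hpos hJpos.le

theorem det_fromBlocks_zero_one_one_zero {R : Type*} [CommRing R] :
    (fromBlocks 0 1 1 0 : Matrix (n ⊕ n) (n ⊕ n) R).det = (-1) ^ Fintype.card n := by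
  have h : (fromBlocks 0 1 1 0 : Matrix (n ⊕ n) (n ⊕ n) R) * fromBlocks 1 0 1 1 =
      fromBlocks 1 1 1 0 := by
    simp [fromBlocks_multiply]
  have := congrArg det h
  rw [det_mul, det_fromBlocks_zero₁₂, det_fromBlocks_one₁₁] at this
  simpa [det_neg] using this

end Matrix

section DualPairing

variable (V : Type*) [AddCommGroup V] [Module ℝ V]

noncomputable def dualPairing :
    (V × Module.Dual ℝ V) →ₗ[ℝ] (V × Module.Dual ℝ V) →ₗ[ℝ] ℝ :=
  LinearMap.mk₂ ℝ (fun v w => (w.2 v.1 + v.2 w.1) / 2)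
    (by intros; simp only [Prod.fst_add, Prod.snd_add, map_add, LinearMap.add_apply]; ring)
    (by
      intros
      simp only [Prod.smul_fst, Prod.smul_snd, map_smul, LinearMap.smul_apply, smul_eq_mul]
      ring)
    (by intros; simp only [Prod.fst_add, Prod.snd_add, map_add, LinearMap.add_apply]; ring)
    (by
      intros
      simp only [Prod.smul_fst, Prod.smul_snd, map_smul, LinearMap.smul_apply, smul_eq_mul]
      ring)

variable {V}

theorem dualPairing_apply (v w : V × Module.Dual ℝ V) :
    dualPairing V v w = (w.2 v.1 + v.2 w.1) / 2 := rfl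

theorem toMatrix₂_dualPairing {ι : Type*} [Fintype ι] [DecidableEq ι]
    (b : Module.Basis ι ℝ V) :
    LinearMap.toMatrix₂ (b.prod b.dualBasis) (b.prod b.dualBasis) (dualPairing V) =
      (2⁻¹ : ℝ) • fromBlocks 0 1 1 0 := by
  ext (i | i) (j | j) <;>
    simp [LinearMap.toMatrix₂_apply, dualPairing_apply, Matrix.one_apply, Finsupp.single_apply,
      eq_comm, div_eq_inv_mul]

end DualPairing

/-- If there exists a generalized complex structure on `V`,
i.e. a linear map `J : 𝕍 → 𝕍` on `𝕍 = V ⊕ V*` with `J² = −Id` which is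
orthogonal with respect to the natural pairing
`⟨X + ξ, Y + η⟩ = ½(η(X) + ξ(Y))`, then the dimension `m` of `V` is even. -/
theorem dim_even_of_generalized_complex_structure
    (V : Type*) [AddCommGroup V] [Module ℝ V] [FiniteDimensional ℝ V]
    (P : (V × Module.Dual ℝ V) → (V × Module.Dual ℝ V) → ℝ)
    (hP : ∀ v w : V × Module.Dual ℝ V, P v w = (w.2 v.1 + v.2 w.1) / 2)
    (J : (V × Module.Dual ℝ V) →ₗ[ℝ] (V × Module.Dual ℝ V))
    (hJ2 : J ∘ₗ J = -LinearMap.id)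
    (horth : ∀ v w, P (J v) (J w) = P v w) :
    Even (Module.finrank ℝ V) := by
  let b := Module.finBasis ℝ V
  let B := b.prod b.dualBasis
  have hG := toMatrix₂_dualPairing b
  have hJJ : LinearMap.toMatrix B B J * LinearMap.toMatrix B B J = -1 := by
    rw [← LinearMap.toMatrix_comp, hJ2, ← LinearMap.toMatrix_id B]
    exact map_neg (LinearMap.toMatrix B B) LinearMap.id
  have hJorth : (LinearMap.toMatrix B B J)ᵀ * LinearMap.toMatrix₂ B B (dualPairing V) *
      LinearMap.toMatrix B B J = LinearMap.toMatrix₂ B B (dualPairing V) := by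
    rw [← LinearMap.toMatrix₂_compl₁₂]
    congr 1
    refine LinearMap.ext₂ fun v w => ?_
    simp only [LinearMap.compl₁₂_apply, dualPairing_apply, ← hP, horth]
  have hdet :
      (LinearMap.toMatrix₂ B B (dualPairing V)).det = (-4⁻¹ : ℝ) ^ Module.finrank ℝ V := by
    rw [hG, det_smul, det_fromBlocks_zero_one_one_zero, Fintype.card_sum, Fintype.card_fin,
      ← two_mul, pow_mul, ← mul_pow]
    norm_num
  have hpos := det_pos_of_transpose_mul_mul_eq
    (by rw [IsSymm, hG]; simp [fromBlocks_transpose]) (by rw [hdet]; norm_num) hJJ hJorth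
  rw [hdet] at hpos
  by_contra hodd
  exact absurd ((Nat.not_even_iff_odd.mp hodd).pow_pos_iff.mp hpos) (by norm_num)
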